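/- Let q₁, q₂ be complex polynomials with deg q₁ = deg q₂ = d ≥ 2, and define F : ℂ × ℂ → ℂ × ℂ by F(w₁, w₂) = (q₁.eval w₁, q₂.eval w₂). Then J₂(F) = (J(q₁) ×ˢ K(q₂)) ∪ (K(q₁) ×ˢ J(q₂)), where for a complex polynomial p, K(p) := {z ∈ ℂ : the orbit (p^[n](z))_{n∈ℕ} is bounded} is its filled-in Julia set and J(p) := {z ∈ ℂ : the family of iterates {p^[n] : n ∈ ℕ} is not normal (general sense) at z} is its Julia set. -/

import Mathlib

/-- A family `F : ι → α → E` of functions into a normed space is normal in the general sense on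
a set `U` if every sequence in the family has a subsequence which either converges uniformly on
every compact subset of `U` to a limit function, or diverges uniformly to `∞` on every compact
subset of `U`. -/
def NormalGenOn {α E ι : Type*} [TopologicalSpace α] [NormedAddCommGroup E]
    (F : ι → α → E) (U : Set α) : Prop :=
  ∀ u : ℕ → ι, ∃ φ : ℕ → ℕ, StrictMono φ ∧
    ((∃ f : α → E, ∀ K : Set α, K ⊆ U → IsCompact K →
        TendstoUniformlyOn (fun n => F (u (φ n))) f Filter.atTop K) ∨
     (∀ K : Set α, K ⊆ U → IsCompact K → ∀ M : ℝ, 0 < M →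
        ∀ᶠ n in Filter.atTop, ∀ z ∈ K, M ≤ ‖F (u (φ n)) z‖))

/-- A family is normal in the general sense at a point if it is normal in the general sense on
some open neighborhood of that point. -/
def NormalGenAt {α E ι : Type*} [TopologicalSpace α] [NormedAddCommGroup E]
    (F : ι → α → E) (z : α) : Prop :=
  ∃ U : Set α, IsOpen U ∧ z ∈ U ∧ NormalGenOn F U

/-- The Julia set of a self-map `G` of a normed space: the set of points at which the family of
iterates `{G^[n] : n ∈ ℕ}` is not normal in the general sense. -/
def juliaSet {E : Type*} [NormedAddCommGroup E] (G : E → E) : Set E :=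
  {z | ¬ NormalGenAt (fun n : ℕ => G^[n]) z}

/-- The filled-in Julia set of a self-map `G` of a normed space: the set of points with bounded
orbit under `G`. -/
def filledJuliaSet {E : Type*} [NormedAddCommGroup E] (G : E → E) : Set E :=
  {z | Bornology.IsBounded (Set.range fun n : ℕ => G^[n] z)}

/-!
Iterates of `Prod.map G₁ G₂` are products of iterates. If both factor families are normal near
`z₁` and `z₂`, a sub-subsequence argument makes the product family normal near `(z₁, z₂)`.
Conversely, if the product family is normal near `(z₁, z₂)` and the orbit of `z₂` is bounded,
restricting to the slice through `z₂` shows the first factor is normal near `z₁`: the bounded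
second coordinate cannot account for divergence. Finally, a polynomial of degree at least 2
satisfies `‖q z‖ ≥ 2 ‖z‖` near infinity, so off its filled Julia set its iterates diverge
uniformly on a neighbourhood; then the product family is normal there whatever the other
factor does, because every sequence of iteration counts has a constant subsequence or tends
to infinity.
-/

open Filter Set Bornology

theorem TendstoUniformlyOn.comp_tendsto {ι κ α β : Type*} [UniformSpace β] {F : ι → α → β}
    {f : α → β} {l : Filter ι} {s : Set α} (h : TendstoUniformlyOn F f l s) {u : κ → ι}
    {l' : Filter κ} (hu : Tendsto u l' l) : TendstoUniformlyOn (fun k => F (u k)) f l' s :=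
  fun v hv => hu.eventually (h v hv)

theorem Nat.exists_strictMono_const_or_tendsto_atTop (u : ℕ → ℕ) :
    (∃ φ : ℕ → ℕ, StrictMono φ ∧ ∃ c, ∀ n, u (φ n) = c) ∨ Tendsto u atTop atTop := by
  by_cases h : ∃ c, ∃ᶠ n in atTop, u n = c
  · obtain ⟨c, hc⟩ := h
    obtain ⟨φ, hφ, hφc⟩ := extraction_of_frequently_atTop hc
    exact .inl ⟨φ, hφ, c, hφc⟩
  · push Not at h
    exact .inr ((le_cofinite_iff_eventually_ne.2 h).trans Nat.cofinite_eq_atTop.le)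

section NormalFamily

variable {ι κ α β α₁ α₂ E E₁ E₂ : Type*} [NormedAddCommGroup E] [NormedAddCommGroup E₁]
  [NormedAddCommGroup E₂]

def DivergesUniformlyOn (F : ι → α → E) (l : Filter ι) (s : Set α) : Prop :=
  ∀ M : ℝ, 0 < M → ∀ᶠ i in l, ∀ x ∈ s, M ≤ ‖F i x‖

theorem normalGenOn_iff [TopologicalSpace α] {F : ι → α → E} {U : Set α} :
    NormalGenOn F U ↔ ∀ u : ℕ → ι, ∃ φ : ℕ → ℕ, StrictMono φ ∧
      ((∃ f : α → E, ∀ K ⊆ U, IsCompact K → TendstoUniformlyOn (fun n => F (u (φ n))) f atTop K) ∨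
        ∀ K ⊆ U, IsCompact K → DivergesUniformlyOn (fun n => F (u (φ n))) atTop K) :=
  Iff.rfl

namespace DivergesUniformlyOn

variable {l : Filter ι} {s t : Set α}

theorem mono {F : ι → α → E} (h : DivergesUniformlyOn F l s) (hts : t ⊆ s) :
    DivergesUniformlyOn F l t :=
  fun M hM => (h M hM).mono fun _ hi x hx => hi x (hts hx)

theorem comp_tendsto {F : ι → α → E} (h : DivergesUniformlyOn F l s) {u : κ → ι}
    {l' : Filter κ} (hu : Tendsto u l' l) : DivergesUniformlyOn (fun k => F (u k)) l' s :=
  fun M hM => hu.eventually (h M hM)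

theorem comp {F : ι → α → E} (h : DivergesUniformlyOn F l s) (g : β → α) :
    DivergesUniformlyOn (fun i => F i ∘ g) l (g ⁻¹' s) :=
  fun M hM => (h M hM).mono fun _ hi x hx => hi (g x) hx

theorem prodMap_left {F₁ : ι → α₁ → E₁} {s : Set α₁} (h : DivergesUniformlyOn F₁ l s)
    (F₂ : ι → α₂ → E₂) :
    DivergesUniformlyOn (fun i => Prod.map (F₁ i) (F₂ i)) l (Prod.fst ⁻¹' s) :=
  fun M hM => (h M hM).mono fun _ hi x hx => (hi x.1 hx).trans (le_max_left _ _)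

theorem prodMap_right {F₂ : ι → α₂ → E₂} {s : Set α₂} (h : DivergesUniformlyOn F₂ l s)
    (F₁ : ι → α₁ → E₁) :
    DivergesUniformlyOn (fun i => Prod.map (F₁ i) (F₂ i)) l (Prod.snd ⁻¹' s) :=
  fun M hM => (h M hM).mono fun _ hi x hx => (hi x.2 hx).trans (le_max_right _ _)

end DivergesUniformlyOn

variable [TopologicalSpace α] [TopologicalSpace β] [TopologicalSpace α₁] [TopologicalSpace α₂]

theorem normalGenOn_of_divergesUniformlyOn {F : ℕ → α → E} {U : Set α}
    (h : DivergesUniformlyOn F atTop U) : NormalGenOn F U := by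
  refine normalGenOn_iff.2 fun u => ?_
  rcases Nat.exists_strictMono_const_or_tendsto_atTop u with ⟨φ, hφ, c, hc⟩ | hu
  · refine ⟨φ, hφ, .inl ⟨F c, fun K _ _ => ?_⟩⟩
    simp only [hc]
    exact fun v hv => .of_forall fun _ x _ => refl_mem_uniformity hv
  · exact ⟨id, strictMono_id, .inr fun K hK _ => (h.comp_tendsto hu).mono hK⟩

namespace NormalGenOn

theorem comp {F : ι → α → E} {U : Set α} (h : NormalGenOn F U) {g : β → α} (hg : Continuous g) :
    NormalGenOn (fun i => F i ∘ g) (g ⁻¹' U) := by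
  refine normalGenOn_iff.2 fun u => ?_
  obtain ⟨φ, hφ, ⟨f, hf⟩ | hdiv⟩ := normalGenOn_iff.1 h u
  · refine ⟨φ, hφ, .inl ⟨f ∘ g, fun K hK hKc => ?_⟩⟩
    exact ((hf _ (image_subset_iff.2 hK) (hKc.image hg)).comp g).mono (subset_preimage_image g K)
  · refine ⟨φ, hφ, .inr fun K hK hKc => ?_⟩
    exact ((hdiv _ (image_subset_iff.2 hK) (hKc.image hg)).comp g).mono (subset_preimage_image g K)

theorem uniformContinuous_comp {F : ι → α → E} {U : Set α} (h : NormalGenOn F U) {e : E → E₁}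
    (he : UniformContinuous e) (he_norm : ∀ y, ‖e y‖ = ‖y‖) : NormalGenOn (fun i => e ∘ F i) U := by
  refine normalGenOn_iff.2 fun u => ?_
  obtain ⟨φ, hφ, ⟨f, hf⟩ | hdiv⟩ := normalGenOn_iff.1 h u
  · exact ⟨φ, hφ, .inl ⟨e ∘ f, fun K hK hKc => he.comp_tendstoUniformlyOn (hf K hK hKc)⟩⟩
  · exact ⟨φ, hφ, .inr fun K hK hKc M hM => (hdiv K hK hKc M hM).mono fun _ hn x hx =>
      (hn x hx).trans_eq (he_norm _).symm⟩

theorem fst {F : ι → α → E₁ × E₂} {U : Set α} (h : NormalGenOn F U) {C : ℝ}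
    (hC : ∀ i, ∀ x ∈ U, ‖(F i x).2‖ ≤ C) : NormalGenOn (fun i x => (F i x).1) U := by
  refine normalGenOn_iff.2 fun u => ?_
  obtain ⟨φ, hφ, ⟨f, hf⟩ | hdiv⟩ := normalGenOn_iff.1 h u
  · exact ⟨φ, hφ, .inl ⟨fun x => (f x).1, fun K hK hKc =>
      uniformContinuous_fst.comp_tendstoUniformlyOn (hf K hK hKc)⟩⟩
  · refine ⟨φ, hφ, .inr fun K hK hKc M hM => ?_⟩
    filter_upwards [hdiv K hK hKc (max M (C + 1)) (lt_max_of_lt_left hM)] with n hn x hx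
    have hsnd := hC (u (φ n)) x (hK hx)
    -- the second component stays below `C + 1`, so the first one carries the divergence
    rcases le_max_iff.1 (hn x hx) with h₁ | h₂
    · exact (le_max_left _ _).trans h₁
    · linarith [le_max_right M (C + 1)]

theorem prodMap {F₁ : ι → α₁ → E₁} {F₂ : ι → α₂ → E₂} {U₁ : Set α₁} {U₂ : Set α₂}
    (h₁ : NormalGenOn F₁ U₁) (h₂ : NormalGenOn F₂ U₂) :
    NormalGenOn (fun i => Prod.map (F₁ i) (F₂ i)) (U₁ ×ˢ U₂) := by
  refine normalGenOn_iff.2 fun u => ?_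
  obtain ⟨φ₁, hφ₁, H₁⟩ := normalGenOn_iff.1 h₁ u
  obtain ⟨φ₂, hφ₂, H₂⟩ := normalGenOn_iff.1 h₂ (u ∘ φ₁)
  refine ⟨φ₁ ∘ φ₂, hφ₁.comp hφ₂, ?_⟩
  have hfst {K : Set (α₁ × α₂)} (hK : K ⊆ U₁ ×ˢ U₂) : Prod.fst '' K ⊆ U₁ :=
    image_subset_iff.2 fun _ hx => (hK hx).1
  have hsnd {K : Set (α₁ × α₂)} (hK : K ⊆ U₁ ×ˢ U₂) : Prod.snd '' K ⊆ U₂ :=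
    image_subset_iff.2 fun _ hx => (hK hx).2
  rcases H₂ with ⟨f₂, hf₂⟩ | hdiv₂
  · rcases H₁ with ⟨f₁, hf₁⟩ | hdiv₁
    · refine .inl ⟨Prod.map f₁ f₂, fun K hK hKc => ?_⟩
      have c₁ := (((hf₁ _ (hfst hK) (hKc.image continuous_fst)).comp Prod.fst).mono
        (subset_preimage_image _ _)).comp_tendsto hφ₂.tendsto_atTop
      have c₂ := ((hf₂ _ (hsnd hK) (hKc.image continuous_snd)).comp Prod.snd).mono
        (subset_preimage_image _ _)
      exact (c₁.prodMk c₂).comp_tendsto tendsto_diag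
    · refine .inr fun K hK hKc => ?_
      exact (((hdiv₁ _ (hfst hK) (hKc.image continuous_fst)).comp_tendsto
        hφ₂.tendsto_atTop).prodMap_left _).mono (subset_preimage_image _ _)
  · refine .inr fun K hK hKc => ?_
    exact ((hdiv₂ _ (hsnd hK) (hKc.image continuous_snd)).prodMap_right _).mono
      (subset_preimage_image _ _)

theorem prodMap_swap {F₁ : ι → α₁ → E₁} {F₂ : ι → α₂ → E₂} {U : Set (α₁ × α₂)}
    (h : NormalGenOn (fun i => Prod.map (F₁ i) (F₂ i)) U) :
    NormalGenOn (fun i => Prod.map (F₂ i) (F₁ i)) (Prod.swap ⁻¹' U) :=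
  (h.comp continuous_swap).uniformContinuous_comp
    (uniformContinuous_snd.prodMk uniformContinuous_fst) fun _ => max_comm _ _

end NormalGenOn

end NormalFamily

section JuliaSet

variable {E E₁ E₂ : Type*} [NormedAddCommGroup E] [NormedAddCommGroup E₁] [NormedAddCommGroup E₂]
  {G₁ : E₁ → E₁} {G₂ : E₂ → E₂}

theorem notMem_juliaSet_iff {G : E → E} {z : E} :
    z ∉ juliaSet G ↔ NormalGenAt (fun n => G^[n]) z :=
  not_not

theorem mk_notMem_juliaSet_prodMap {z₁ : E₁} {z₂ : E₂} (h₁ : z₁ ∉ juliaSet G₁)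
    (h₂ : z₂ ∉ juliaSet G₂) : (z₁, z₂) ∉ juliaSet (Prod.map G₁ G₂) := by
  rw [notMem_juliaSet_iff] at *
  obtain ⟨U₁, hU₁, hz₁, hN₁⟩ := h₁
  obtain ⟨U₂, hU₂, hz₂, hN₂⟩ := h₂
  simp only [Prod.map_iterate]
  exact ⟨U₁ ×ˢ U₂, hU₁.prod hU₂, ⟨hz₁, hz₂⟩, hN₁.prodMap hN₂⟩

theorem swap_notMem_juliaSet_prodMap {p : E₁ × E₂} (h : p ∉ juliaSet (Prod.map G₁ G₂)) :
    p.swap ∉ juliaSet (Prod.map G₂ G₁) := by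
  rw [notMem_juliaSet_iff] at *
  obtain ⟨U, hU, hpU, hN⟩ := h
  simp only [Prod.map_iterate] at hN ⊢
  exact ⟨Prod.swap ⁻¹' U, hU.preimage continuous_swap, hpU, hN.prodMap_swap⟩

theorem mk_mem_juliaSet_prodMap {z₁ : E₁} {z₂ : E₂} (h₁ : z₁ ∈ juliaSet G₁)
    (h₂ : z₂ ∈ filledJuliaSet G₂) : (z₁, z₂) ∈ juliaSet (Prod.map G₁ G₂) := by
  contrapose! h₁
  rw [notMem_juliaSet_iff] at *
  obtain ⟨U, hU, hzU, hN⟩ := h₁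
  simp only [Prod.map_iterate] at hN
  obtain ⟨C, hC⟩ := isBounded_iff_forall_norm_le.1 h₂
  have hslice : Continuous fun w : E₁ => (w, z₂) := continuous_id.prodMk continuous_const
  exact ⟨_, hU.preimage hslice, hzU, (hN.comp hslice).fst fun n _ _ => hC _ (mem_range_self n)⟩

theorem mk_notMem_juliaSet_prodMap_of_divergesUniformlyOn {V : Set E₁} (hV : IsOpen V) {z₁ : E₁}
    (hz₁ : z₁ ∈ V) (h : DivergesUniformlyOn (fun n => G₁^[n]) atTop V) (z₂ : E₂) :
    (z₁, z₂) ∉ juliaSet (Prod.map G₁ G₂) := by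
  rw [notMem_juliaSet_iff]
  simp only [Prod.map_iterate]
  exact ⟨Prod.fst ⁻¹' V, hV.preimage continuous_fst, hz₁,
    normalGenOn_of_divergesUniformlyOn (h.prodMap_left _)⟩

end JuliaSet

section Escape

variable {E : Type*} [NormedAddCommGroup E] {G : E → E}

theorem pow_mul_norm_le_norm_iterate {R : ℝ} (hG : ∀ z, R ≤ ‖z‖ → 2 * ‖z‖ ≤ ‖G z‖) {z : E}
    (hz : R ≤ ‖z‖) (n : ℕ) : 2 ^ n * ‖z‖ ≤ ‖G^[n] z‖ := by
  induction n with
  | zero => simp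
  | succ n ih =>
    have hR : R ≤ ‖G^[n] z‖ :=
      hz.trans <| (le_mul_of_one_le_left (norm_nonneg z) (one_le_pow₀ one_le_two)).trans ih
    rw [Function.iterate_succ_apply', pow_succ']
    calc 2 * 2 ^ n * ‖z‖ ≤ 2 * ‖G^[n] z‖ := by rw [mul_assoc]; gcongr
      _ ≤ ‖G (G^[n] z)‖ := hG _ hR

theorem divergesUniformlyOn_iterate {R : ℝ} (hR : 0 < R)
    (hG : ∀ z, R ≤ ‖z‖ → 2 * ‖z‖ ≤ ‖G z‖) :
    DivergesUniformlyOn (fun n => G^[n]) atTop {z | R ≤ ‖z‖} := by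
  intro M _
  obtain ⟨k, hk⟩ := pow_unbounded_of_one_lt (M / R) one_lt_two
  filter_upwards [eventually_ge_atTop k] with n hn z hz
  calc M ≤ 2 ^ k * R := ((div_lt_iff₀ hR).1 hk).le
    _ ≤ 2 ^ n * ‖z‖ := by gcongr; exact one_le_two
    _ ≤ ‖G^[n] z‖ := pow_mul_norm_le_norm_iterate hG hz n

theorem DivergesUniformlyOn.iterate_preimage {s : Set E}
    (h : DivergesUniformlyOn (fun n => G^[n]) atTop s) (N : ℕ) :
    DivergesUniformlyOn (fun n => G^[n]) atTop (G^[N] ⁻¹' s) := by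
  intro M hM
  filter_upwards [(tendsto_sub_atTop_nat N).eventually (h M hM), eventually_ge_atTop N]
    with n hn hNn z hz
  rw [← Nat.sub_add_cancel hNn, Function.iterate_add_apply]
  exact hn _ hz

theorem exists_isOpen_divergesUniformlyOn_iterate (hGc : Continuous G)
    (hG : ∀ᶠ z in cobounded E, 2 * ‖z‖ ≤ ‖G z‖) {z : E} (hz : z ∉ filledJuliaSet G) :
    ∃ V, IsOpen V ∧ z ∈ V ∧ DivergesUniformlyOn (fun n => G^[n]) atTop V := by
  obtain ⟨R, -, hR⟩ := hasBasis_cobounded_norm.eventually_iff.1 hG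
  set R' := max R 1
  obtain ⟨N, hN⟩ : ∃ N, R' < ‖G^[N] z‖ := by
    by_contra! h
    exact hz (isBounded_iff_forall_norm_le.2 ⟨R', forall_mem_range.2 h⟩)
  refine ⟨G^[N] ⁻¹' {w | R' < ‖w‖},
    (isOpen_lt continuous_const continuous_norm).preimage (hGc.iterate N), hN, ?_⟩
  have hexp := divergesUniformlyOn_iterate (lt_max_of_lt_right one_pos) fun w hw =>
    hR (le_of_max_le_left hw)
  exact (hexp.iterate_preimage N).mono (preimage_mono fun _ hw => (show R' < _ from hw).le)

end Escape

theorem Polynomial.eventually_two_mul_norm_le_norm_eval {𝕜 : Type*} [NormedField 𝕜]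
    {q : Polynomial 𝕜} (hq : 2 ≤ q.natDegree) : ∀ᶠ z in cobounded 𝕜, 2 * ‖z‖ ≤ ‖q.eval z‖ := by
  have hdeg : 0 < q.divX.degree := by
    rw [← natDegree_pos_iff_degree_pos, natDegree_divX_eq_natDegree_tsub_one]
    omega
  have hdivX := q.divX.tendsto_norm_atTop hdeg tendsto_norm_cobounded_atTop
  filter_upwards [hdivX.eventually_ge_atTop 3, eventually_cobounded_le_norm ‖q.coeff 0‖]
    with z hz hz₀
  have hq : q.eval z = z * q.divX.eval z + q.coeff 0 := by
    conv_lhs => rw [← X_mul_divX_add q, eval_add, eval_mul, eval_X, eval_C]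
  calc 2 * ‖z‖ ≤ ‖z * q.divX.eval z‖ - ‖q.coeff 0‖ := by
        rw [norm_mul]; nlinarith [norm_nonneg z]
    _ ≤ ‖q.eval z‖ := by rw [hq]; exact norm_sub_le_norm_add _ _

theorem juliaSet_prodMap {E₁ E₂ : Type*} [NormedAddCommGroup E₁] [NormedAddCommGroup E₂]
    {G₁ : E₁ → E₁} {G₂ : E₂ → E₂} (hG₁ : Continuous G₁) (hG₂ : Continuous G₂)
    (hexp₁ : ∀ᶠ z in cobounded E₁, 2 * ‖z‖ ≤ ‖G₁ z‖)
    (hexp₂ : ∀ᶠ z in cobounded E₂, 2 * ‖z‖ ≤ ‖G₂ z‖) :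
    juliaSet (Prod.map G₁ G₂) =
      juliaSet G₁ ×ˢ filledJuliaSet G₂ ∪ filledJuliaSet G₁ ×ˢ juliaSet G₂ := by
  ext ⟨z₁, z₂⟩
  constructor
  · intro hz
    by_contra hnot
    simp only [mem_union, mem_prod, not_or, not_and] at hnot
    by_cases hK₁ : z₁ ∈ filledJuliaSet G₁
    · by_cases hK₂ : z₂ ∈ filledJuliaSet G₂
      · exact mk_notMem_juliaSet_prodMap (fun h => hnot.1 h hK₂) (hnot.2 hK₁) hz
      · obtain ⟨V, hV, hz₂, hdiv⟩ := exists_isOpen_divergesUniformlyOn_iterate hG₂ hexp₂ hK₂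
        exact swap_notMem_juliaSet_prodMap
          (mk_notMem_juliaSet_prodMap_of_divergesUniformlyOn hV hz₂ hdiv z₁) hz
    · obtain ⟨V, hV, hz₁, hdiv⟩ := exists_isOpen_divergesUniformlyOn_iterate hG₁ hexp₁ hK₁
      exact mk_notMem_juliaSet_prodMap_of_divergesUniformlyOn hV hz₁ hdiv z₂ hz
  · rintro (⟨hJ₁, hK₂⟩ | ⟨hK₁, hJ₂⟩)
    · exact mk_mem_juliaSet_prodMap hJ₁ hK₂
    · by_contra hz
      exact swap_notMem_juliaSet_prodMap hz (mk_mem_juliaSet_prodMap hJ₂ hK₁)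

/-- For a non-degenerate bicomplex polynomial `F(w₁, w₂) = (q₁(w₁), q₂(w₂))` of degree `d ≥ 2`,
the bicomplex Julia set is
`J₂(F) = (J(q₁) ×ˢ K(q₂)) ∪ (K(q₁) ×ˢ J(q₂))`,
where `J(p)` and `K(p)` are the Julia set and filled-in Julia set of a complex polynomial. -/
theorem stmt16 (q₁ q₂ : Polynomial ℂ) (d : ℕ) (hd : 2 ≤ d)
    (h₁ : q₁.natDegree = d) (h₂ : q₂.natDegree = d) :
    juliaSet (fun w : ℂ × ℂ => (q₁.eval w.1, q₂.eval w.2)) =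
      (juliaSet (fun z : ℂ => q₁.eval z) ×ˢ filledJuliaSet (fun z : ℂ => q₂.eval z)) ∪
      (filledJuliaSet (fun z : ℂ => q₁.eval z) ×ˢ juliaSet (fun z : ℂ => q₂.eval z)) :=
  juliaSet_prodMap q₁.continuous q₂.continuous
    (q₁.eventually_two_mul_norm_le_norm_eval (h₁ ▸ hd))
    (q₂.eventually_two_mul_norm_le_norm_eval (h₂ ▸ hd))
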